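/- Let p be a prime and v the p-adic valuation on ℚ_p (or on the fraction field of a complete DVR). Let α₁, α₂, β₁, β₂, γ₁, γ₂ be nonzero elements with valuations a₁, a₂, b₁, b₂, c₁, c₂ ≥ 0. If the multiset of valuations {v(α_i β_j γ_k)} equals {0,0,0,0,f,f,f,f} with f > 0, then after reordering within each pair, (a₁,a₂), (b₁,b₂), (c₁,c₂) consist of two pairs equal to (0,0) and one pair equal to (0,f). -/

import Mathlib

/-!
Write `a_i, b_j, c_k` for the valuations. Since they are nonnegative and some triple sum
`a_i + b_j + c_k` vanishes, each pair contains a zero, so the pairs are `{0, x}`, `{0, y}`, `{0, z}`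
with `x, y, z` themselves triple sums, hence in `{0, f}`. Summing all eight triple sums gives
`4 (x + y + z) = 4 f`, so exactly one of `x, y, z` equals `f`.
-/

theorem Multiset.pair_eq_zero_add {M : Type*} [AddZeroClass M] {a₁ a₂ : M}
    (h : a₁ = 0 ∨ a₂ = 0) : ({a₁, a₂} : Multiset M) = {0, a₁ + a₂} := by
  rcases h with rfl | rfl
  · simp
  · simpa using Multiset.cons_swap a₁ 0 0

theorem Padic.valuation_mul_mul {p : ℕ} [Fact p.Prime] {x y z : ℚ_[p]}
    (hx : x ≠ 0) (hy : y ≠ 0) (hz : z ≠ 0) :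
    (x * y * z).valuation = x.valuation + y.valuation + z.valuation := by
  rw [Padic.valuation_mul (mul_ne_zero hx hy) hz, Padic.valuation_mul hx hy]

theorem exactly_one_eq_of_add_eq {f x y z : ℤ} (hf : 0 < f) (hx : x = 0 ∨ x = f)
    (hy : y = 0 ∨ y = f) (hz : z = 0 ∨ z = f) (hsum : x + y + z = f) :
    (x = f ∧ y = 0 ∧ z = 0) ∨ (x = 0 ∧ y = f ∧ z = 0) ∨ (x = 0 ∧ y = 0 ∧ z = f) := by
  omega

theorem pairs_of_tripleSums_eq {f a₁ a₂ b₁ b₂ c₁ c₂ : ℤ} (hf : 0 < f)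
    (ha₁ : 0 ≤ a₁) (ha₂ : 0 ≤ a₂) (hb₁ : 0 ≤ b₁) (hb₂ : 0 ≤ b₂) (hc₁ : 0 ≤ c₁) (hc₂ : 0 ≤ c₂)
    (hm : ({a₁ + b₁ + c₁, a₁ + b₁ + c₂, a₁ + b₂ + c₁, a₁ + b₂ + c₂,
            a₂ + b₁ + c₁, a₂ + b₁ + c₂, a₂ + b₂ + c₁, a₂ + b₂ + c₂} : Multiset ℤ)
        = Multiset.replicate 4 0 + Multiset.replicate 4 f) :
    (({a₁, a₂} : Multiset ℤ) = {0, f} ∧ ({b₁, b₂} : Multiset ℤ) = {0, 0} ∧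
      ({c₁, c₂} : Multiset ℤ) = {0, 0}) ∨
    (({a₁, a₂} : Multiset ℤ) = {0, 0} ∧ ({b₁, b₂} : Multiset ℤ) = {0, f} ∧
      ({c₁, c₂} : Multiset ℤ) = {0, 0}) ∨
    (({a₁, a₂} : Multiset ℤ) = {0, 0} ∧ ({b₁, b₂} : Multiset ℤ) = {0, 0} ∧
      ({c₁, c₂} : Multiset ℤ) = {0, f}) := by
  have hsum : a₁ + a₂ + (b₁ + b₂) + (c₁ + c₂) = f := by
    have := congrArg Multiset.sum hm
    simp only [Multiset.insert_eq_cons, Multiset.sum_cons, Multiset.sum_singleton,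
      Multiset.sum_add, Multiset.sum_replicate, nsmul_eq_mul, Nat.cast_ofNat] at this
    linarith
  have hvals : ∀ s ∈ Multiset.replicate 4 0 + Multiset.replicate 4 f, s = 0 ∨ s = f := by
    simp +contextual
  have hzero : (0 : ℤ) ∈ Multiset.replicate 4 0 + Multiset.replicate 4 f := by simp
  rw [← hm] at hvals hzero
  simp only [Multiset.insert_eq_cons, Multiset.mem_cons, Multiset.mem_singleton,
    forall_eq_or_imp, forall_eq] at hvals hzero
  obtain ⟨ha, hb, hc⟩ : (a₁ = 0 ∨ a₂ = 0) ∧ (b₁ = 0 ∨ b₂ = 0) ∧ (c₁ = 0 ∨ c₂ = 0) := by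
    omega
  rw [Multiset.pair_eq_zero_add ha, Multiset.pair_eq_zero_add hb, Multiset.pair_eq_zero_add hc]
  have hx : a₁ + a₂ = 0 ∨ a₁ + a₂ = f := by omega
  have hy : b₁ + b₂ = 0 ∨ b₁ + b₂ = f := by omega
  have hz : c₁ + c₂ = 0 ∨ c₁ + c₂ = f := by omega
  rcases exactly_one_eq_of_add_eq hf hx hy hz hsum with
    ⟨h₁, h₂, h₃⟩ | ⟨h₁, h₂, h₃⟩ | ⟨h₁, h₂, h₃⟩ <;> simp [h₁, h₂, h₃]

/-- (Lemma 5.2, valuation form, case m = 2.) If nonzero `p`-adic numbers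
`α₁, α₂, β₁, β₂, γ₁, γ₂` have nonnegative valuations and the eight triple
products `α_i β_j γ_k` have valuation multiset `{0,0,0,0,f,f,f,f}` with `f > 0`,
then (up to reordering within each pair) two of the valuation pairs are `{0,0}`
and one is `{0,f}`. -/
theorem stmt11 (p : ℕ) [Fact p.Prime] (f : ℤ) (hf : 0 < f)
    (α₁ α₂ β₁ β₂ γ₁ γ₂ : ℚ_[p])
    (hα₁ : α₁ ≠ 0) (hα₂ : α₂ ≠ 0) (hβ₁ : β₁ ≠ 0) (hβ₂ : β₂ ≠ 0)
    (hγ₁ : γ₁ ≠ 0) (hγ₂ : γ₂ ≠ 0)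
    (ha₁ : 0 ≤ α₁.valuation) (ha₂ : 0 ≤ α₂.valuation)
    (hb₁ : 0 ≤ β₁.valuation) (hb₂ : 0 ≤ β₂.valuation)
    (hc₁ : 0 ≤ γ₁.valuation) (hc₂ : 0 ≤ γ₂.valuation)
    (hmul : ({(α₁ * β₁ * γ₁).valuation, (α₁ * β₁ * γ₂).valuation,
              (α₁ * β₂ * γ₁).valuation, (α₁ * β₂ * γ₂).valuation,
              (α₂ * β₁ * γ₁).valuation, (α₂ * β₁ * γ₂).valuation,
              (α₂ * β₂ * γ₁).valuation, (α₂ * β₂ * γ₂).valuation} : Multiset ℤ)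
        = Multiset.replicate 4 0 + Multiset.replicate 4 f) :
    (({α₁.valuation, α₂.valuation} : Multiset ℤ) = {0, f} ∧
      ({β₁.valuation, β₂.valuation} : Multiset ℤ) = {0, 0} ∧
      ({γ₁.valuation, γ₂.valuation} : Multiset ℤ) = {0, 0}) ∨
    (({α₁.valuation, α₂.valuation} : Multiset ℤ) = {0, 0} ∧
      ({β₁.valuation, β₂.valuation} : Multiset ℤ) = {0, f} ∧
      ({γ₁.valuation, γ₂.valuation} : Multiset ℤ) = {0, 0}) ∨
    (({α₁.valuation, α₂.valuation} : Multiset ℤ) = {0, 0} ∧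
      ({β₁.valuation, β₂.valuation} : Multiset ℤ) = {0, 0} ∧
      ({γ₁.valuation, γ₂.valuation} : Multiset ℤ) = {0, f}) := by
  simp (disch := assumption) only [Padic.valuation_mul_mul] at hmul
  exact pairs_of_tripleSums_eq hf ha₁ ha₂ hb₁ hb₂ hc₁ hc₂ hmul
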